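/- Let β > 0 and γ ≥ 0 with βγ < 1, and let d > 0 be a real number. Then x̌_d < 1 if and only if β > 1 and d > (1−βγ)/((β−1)(1−γ)). -/

import Mathlib

/-- `x̌_d`, the larger root of `βd x² − (1−βγ+d(1+βγ)) x + γd = 0`. -/
noncomputable def xcheck (β γ d : ℝ) : ℝ :=
  (1 - β * γ + d * (1 + β * γ) +
    Real.sqrt ((1 - β * γ + d * (1 + β * γ)) ^ 2 - 4 * (β * γ) * d ^ 2)) / (2 * β * d)

/-! A number exceeds the larger root of a quadratic with positive leading coefficient iff it lies
to the right of the vertex and the quadratic is positive there. At `t = 1` the quadratic defining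
`x̌_d` takes the value `d (β - 1)(1 - γ) - (1 - βγ)`, and the vertex condition only serves to
exclude the case `β < 1 < γ`. -/

/-- When the discriminant is negative, `√` returns `0`, and both sides reduce to `b < 2at`. -/
theorem add_sqrt_discrim_div_lt_iff {a b c t : ℝ} (ha : 0 < a) :
    (b + √(b ^ 2 - 4 * a * c)) / (2 * a) < t ↔ b < 2 * a * t ∧ 0 < a * t ^ 2 - b * t + c := by
  have hgap : (2 * a * t - b) ^ 2 - (b ^ 2 - 4 * a * c) = 4 * a * (a * t ^ 2 - b * t + c) := by
    ring
  rw [div_lt_iff₀' (by positivity), ← lt_sub_iff_add_lt']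
  constructor
  · intro h
    have hvertex : 0 < 2 * a * t - b := (Real.sqrt_nonneg _).trans_lt (by linarith)
    have hsq := (Real.sqrt_lt' hvertex).1 (by linarith)
    exact ⟨by linarith, pos_of_mul_pos_right (by linarith) (by positivity : (0 : ℝ) ≤ 4 * a)⟩
  · rintro ⟨hvertex, hval⟩
    have hgap_pos : 0 < 4 * a * (a * t ^ 2 - b * t + c) := by positivity
    exact (Real.sqrt_lt' (by linarith)).2 (by linarith)

theorem xcheck_lt_iff {β γ d : ℝ} (hβ : 0 < β) (hd : 0 < d) (t : ℝ) :
    xcheck β γ d < t ↔ 1 - β * γ + d * (1 + β * γ) < 2 * (β * d) * t ∧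
      0 < β * d * t ^ 2 - (1 - β * γ + d * (1 + β * γ)) * t + γ * d := by
  rw [← add_sqrt_discrim_div_lt_iff (mul_pos hβ hd), xcheck]
  ring_nf

theorem one_lt_of_mul_pos_of_add_mul_pos {β γ : ℝ} (hβ : 0 < β) (hprod : 0 < (β - 1) * (1 - γ))
    (hsum : 0 < β - 1 + β * (1 - γ)) : 1 < β := by
  by_contra! hβ1
  have hγ1 : 1 - γ < 0 := neg_of_mul_pos_right hprod (by linarith)
  linarith [mul_neg_of_pos_of_neg hβ hγ1]

theorem xcheck_lt_one_iff_general
    (β γ d : ℝ) (hβ : 0 < β) (hβγ : β * γ < 1) (hd : 0 < d) :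
    xcheck β γ d < 1 ↔ (1 < β ∧ (1 - β * γ) / ((β - 1) * (1 - γ)) < d) := by
  have hvertex : 1 - β * γ + d * (1 + β * γ) < 2 * (β * d) * 1 ↔
      1 - β * γ < d * (β - 1 + β * (1 - γ)) := by
    constructor <;> intro h <;> linarith
  have hvalue : 0 < β * d * 1 ^ 2 - (1 - β * γ + d * (1 + β * γ)) * 1 + γ * d ↔
      1 - β * γ < d * ((β - 1) * (1 - γ)) := by
    constructor <;> intro h <;> linarith
  have hβγ' : 0 < 1 - β * γ := by linarith
  rw [xcheck_lt_iff hβ hd, hvertex, hvalue]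
  constructor
  · rintro ⟨hv, hq⟩
    have hprod : 0 < (β - 1) * (1 - γ) := pos_of_mul_pos_right (hβγ'.trans hq) hd.le
    have hsum : 0 < β - 1 + β * (1 - γ) := pos_of_mul_pos_right (hβγ'.trans hv) hd.le
    exact ⟨one_lt_of_mul_pos_of_add_mul_pos hβ hprod hsum, (div_lt_iff₀ hprod).2 hq⟩
  · rintro ⟨hβ1, hlt⟩
    have hγ1 : γ < 1 := by nlinarith
    have hprod : 0 < (β - 1) * (1 - γ) := mul_pos (by linarith) (by linarith)
    have hq := (div_lt_iff₀ hprod).1 hlt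
    -- `β - 1 + β (1 - γ) = (β - 1)(1 - γ) + (β - γ)`
    exact ⟨by linarith [mul_pos hd (sub_pos.2 (hγ1.trans hβ1))], hq⟩

/-- For `β > 0`, `γ ≥ 0`, `βγ < 1` and `d > 0`: `x̌_d < 1` iff `β > 1` and
`d > (1−βγ)/((β−1)(1−γ))`. -/
theorem xcheck_lt_one_iff
    (β γ d : ℝ) (hβ : 0 < β) (hγ : 0 ≤ γ) (hβγ : β * γ < 1) (hd : 0 < d) :
    xcheck β γ d < 1 ↔ (1 < β ∧ (1 - β * γ) / ((β - 1) * (1 - γ)) < d) :=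
  xcheck_lt_one_iff_general β γ d hβ hβγ hd
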